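/- arXiv:1511.08428 — 6 statements merged into one kernel-verified Lean document; each statement's English description precedes it below -/
import Mathlib

section
/- Let a be a nonzero real number, ℓ a positive integer, and a₁, a₂, …, a_{2ℓ−1} any sequence of 2ℓ−1 real numbers (not necessarily distinct). Then there exist indices i₁ < i₂ < … < i_ℓ such that a_{i_s} − a_{i_t} ≠ a for all 1 ≤ s, t ≤ ℓ. -/
/-! Colour `i` by the parity of `⌊f i / a⌋`. If `f i - f j = a` then `⌊f i / a⌋ = ⌊f j / a⌋ + 1`,
so `i` and `j` get different colours; and among `2ℓ - 1` indices some colour class has at least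
`ℓ` members. -/

theorem Int.floor_div_eq_floor_div_add_one_of_sub_eq {a x y : ℝ} (ha : a ≠ 0) (h : x - y = a) :
    ⌊x / a⌋ = ⌊y / a⌋ + 1 := by
  have hxy : x / a = y / a + 1 := by
    field_simp
    linarith
  rw [hxy, Int.floor_add_one]

theorem Int.even_floor_div_iff_not_even_of_sub_eq {a x y : ℝ} (ha : a ≠ 0) (h : x - y = a) :
    Even ⌊x / a⌋ ↔ ¬Even ⌊y / a⌋ := by
  rw [Int.floor_div_eq_floor_div_add_one_of_sub_eq ha h, Int.even_add_one]

theorem Fintype.exists_card_eq_forall_eq_of_two_mul_sub_one_le {ι : Type*} [Fintype ι]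
    (c : ι → Bool) {ℓ : ℕ} (h : 2 * ℓ - 1 ≤ Fintype.card ι) :
    ∃ s : Finset ι, s.card = ℓ ∧ ∃ b, ∀ i ∈ s, c i = b := by
  have hsplit : (Finset.univ.filter (c · = true)).card + (Finset.univ.filter (c · = false)).card =
      Fintype.card ι := by
    simpa using Finset.card_filter_add_card_filter_not (s := Finset.univ) (c · = true)
  obtain ⟨b, hb⟩ : ∃ b, ℓ ≤ (Finset.univ.filter (c · = b)).card := by
    by_cases ht : ℓ ≤ (Finset.univ.filter (c · = true)).card
    · exact ⟨true, ht⟩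
    · exact ⟨false, by omega⟩
  obtain ⟨s, hsub, hcard⟩ := Finset.exists_subset_card_eq hb
  exact ⟨s, hcard, b, fun i hi => (Finset.mem_filter.mp (hsub hi)).2⟩

theorem smallest_nonresidue_stmt0_general (a : ℝ) (ha : a ≠ 0) (ℓ : ℕ)
    (f : Fin (2 * ℓ - 1) → ℝ) :
    ∃ s : Finset (Fin (2 * ℓ - 1)), s.card = ℓ ∧
      ∀ i ∈ s, ∀ j ∈ s, f i - f j ≠ a := by
  obtain ⟨s, hcard, b, hb⟩ := Fintype.exists_card_eq_forall_eq_of_two_mul_sub_one_le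
    (fun i => decide (Even ⌊f i / a⌋)) (ℓ := ℓ) (by simp)
  refine ⟨s, hcard, fun i hi j hj hij => ?_⟩
  have hsame : Even ⌊f i / a⌋ ↔ Even ⌊f j / a⌋ :=
    decide_eq_decide.mp ((hb i hi).trans (hb j hj).symm)
  exact (iff_not_self (hsame.symm.trans (Int.even_floor_div_iff_not_even_of_sub_eq ha hij))).elim

theorem smallest_nonresidue_stmt0 (a : ℝ) (ha : a ≠ 0) (ℓ : ℕ) (hℓ : 0 < ℓ)
    (f : Fin (2 * ℓ - 1) → ℝ) :
    ∃ s : Finset (Fin (2 * ℓ - 1)), s.card = ℓ ∧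
      ∀ i ∈ s, ∀ j ∈ s, f i - f j ≠ a :=
  smallest_nonresidue_stmt0_general a ha ℓ f
end

section
/- Let q be a prime, u a real number with u > 1, and a an integer with a ≢ 0 (mod q). Let a₁, …, a_t be a sequence of t ≥ 2uq/(q−1) integers (not necessarily distinct). Then there exist an integer ℓ ≥ u and indices i₁ < i₂ < … < i_ℓ such that a_{i_v} − a_{i_w} ≢ a (mod q) for all 1 ≤ v, w ≤ ℓ. -/
/-!
Divide by `a` in `ZMod q`: it suffices to find many indices whose normalized values `f i / a`
never differ by `1`. The `⌊q/2⌋` even residues `2k`, `k < q/2`, never differ by `1`, because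
`2k < q` and `2k' + 1 < q` have different parities. Averaging over the `q` translates of this
set, some translate contains at least `t ⌊q/2⌋ / q ≥ t (q-1) / (2q) ≥ u` of the normalized values.
-/

open Finset

def evenResidues (n : ℕ) : Finset (ZMod n) :=
  (range (n / 2)).image fun k => ((2 * k : ℕ) : ZMod n)

lemma card_evenResidues (n : ℕ) : #(evenResidues n) = n / 2 := by
  rw [evenResidues, card_image_of_injOn, card_range]
  intro k₁ hk₁ k₂ hk₂ h
  simp only [coe_range, Set.mem_Iio] at hk₁ hk₂
  rw [ZMod.natCast_eq_natCast_iff', Nat.mod_eq_of_lt (by omega), Nat.mod_eq_of_lt (by omega)] at h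
  omega

lemma sub_ne_one_of_mem_evenResidues {n : ℕ} {x y : ZMod n} (hx : x ∈ evenResidues n)
    (hy : y ∈ evenResidues n) : x - y ≠ 1 := by
  simp only [evenResidues, mem_image, mem_range] at hx hy
  obtain ⟨k₁, hk₁, rfl⟩ := hx
  obtain ⟨k₂, hk₂, rfl⟩ := hy
  intro h
  have h' : ((2 * k₁ : ℕ) : ZMod n) = ((2 * k₂ + 1 : ℕ) : ZMod n) := by
    push_cast at h ⊢
    linear_combination h
  rw [ZMod.natCast_eq_natCast_iff', Nat.mod_eq_of_lt (by omega), Nat.mod_eq_of_lt (by omega)] at h'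
  omega

lemma exists_card_mul_le_card_filter_sub_mem {G ι : Type*} [AddCommGroup G] [Fintype G]
    [DecidableEq G] [Fintype ι] (A : Finset G) (c : ι → G) :
    ∃ j : G, Fintype.card ι * #A ≤ #{i | c i - j ∈ A} * Fintype.card G := by
  have hfiber (x : G) : #{j | x - j ∈ A} = #A := by
    rw [← A.card_image_of_injective (sub_right_injective (b := x))]
    congr 1
    ext j
    simp only [mem_filter, mem_univ, true_and, mem_image]
    exact ⟨fun h => ⟨x - j, h, sub_sub_cancel x j⟩, fun ⟨k, hk, hj⟩ => hj ▸ by simpa using hk⟩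
  have hsum : ∑ j : G, #{i | c i - j ∈ A} = Fintype.card ι * #A := by
    simp only [card_filter]
    rw [sum_comm]
    simp only [← card_filter, hfiber, sum_const, card_univ, smul_eq_mul]
  obtain ⟨j, -, hj⟩ := exists_le_of_sum_le univ_nonempty
    (f := fun _ => Fintype.card ι * #A) (g := fun j => #{i | c i - j ∈ A} * Fintype.card G)
    (by rw [sum_const, card_univ, smul_eq_mul, ← sum_mul, hsum, mul_comm])
  exact ⟨j, hj⟩

lemma mul_le_mul_div_two_of_div_le {q t : ℕ} {u : ℝ} (hq : 2 ≤ q)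
    (ht : (t : ℝ) ≥ 2 * u * q / (q - 1)) : u * q ≤ t * (q / 2 : ℕ) := by
  have hq' : (2 : ℝ) ≤ q := by exact_mod_cast hq
  have hhalf : ((q : ℝ) - 1) / 2 ≤ (q / 2 : ℕ) := by
    have : (q : ℝ) ≤ 2 * (q / 2 : ℕ) + 1 := by exact_mod_cast (by omega : q ≤ 2 * (q / 2) + 1)
    linarith
  rw [ge_iff_le, div_le_iff₀ (by linarith)] at ht
  nlinarith [mul_le_mul_of_nonneg_left hhalf (Nat.cast_nonneg t)]

theorem smallest_nonresidue_stmt2_general (q : ℕ) (hq : q.Prime) (u : ℝ)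
    (a : ℤ) (ha : ¬ (q : ℤ) ∣ a) (t : ℕ)
    (ht : (t : ℝ) ≥ 2 * u * q / (q - 1)) (f : Fin t → ℤ) :
    ∃ ℓ : ℕ, u ≤ (ℓ : ℝ) ∧ ∃ g : Fin ℓ → Fin t, StrictMono g ∧
      ∀ v w : Fin ℓ, ¬ (f (g v) - f (g w) ≡ a [ZMOD (q : ℤ)]) := by
  have : Fact q.Prime := ⟨hq⟩
  have ha' : (a : ZMod q) ≠ 0 := by rwa [Ne, ZMod.intCast_zmod_eq_zero_iff_dvd]
  set c : Fin t → ZMod q := fun i => f i * (a : ZMod q)⁻¹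
  obtain ⟨j, hj⟩ := exists_card_mul_le_card_filter_sub_mem (evenResidues q) c
  set s : Finset (Fin t) := {i | c i - j ∈ evenResidues q}
  rw [Fintype.card_fin, card_evenResidues, ZMod.card] at hj
  have hsize : u ≤ #s := by
    have hq0 : (0 : ℝ) < q := by exact_mod_cast hq.pos
    refine le_of_mul_le_mul_right ?_ hq0
    exact (mul_le_mul_div_two_of_div_le hq.two_le ht).trans (by exact_mod_cast hj)
  have hfree : ∀ v ∈ s, ∀ w ∈ s, ¬ f v - f w ≡ a [ZMOD q] := by
    intro v hv w hw hvw
    rw [← ZMod.intCast_eq_intCast_iff, Int.cast_sub] at hvw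
    refine sub_ne_one_of_mem_evenResidues (mem_filter.1 hv).2 (mem_filter.1 hw).2 ?_
    calc c v - j - (c w - j) = ((f v : ZMod q) - f w) * (a : ZMod q)⁻¹ := by ring
      _ = 1 := by rw [hvw, mul_inv_cancel₀ ha']
  exact ⟨#s, hsize, s.orderEmbOfFin rfl, (s.orderEmbOfFin rfl).strictMono,
    fun v w => hfree _ (s.orderEmbOfFin_mem rfl v) _ (s.orderEmbOfFin_mem rfl w)⟩

theorem smallest_nonresidue_stmt2 (q : ℕ) (hq : q.Prime) (u : ℝ) (hu : 1 < u)
    (a : ℤ) (ha : ¬ (q : ℤ) ∣ a) (t : ℕ)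
    (ht : (t : ℝ) ≥ 2 * u * q / (q - 1)) (f : Fin t → ℤ) :
    ∃ ℓ : ℕ, u ≤ (ℓ : ℝ) ∧ ∃ g : Fin ℓ → Fin t, StrictMono g ∧
      ∀ v w : Fin ℓ, ¬ (f (g v) - f (g w) ≡ a [ZMOD (q : ℤ)]) :=
  smallest_nonresidue_stmt2_general q hq u a ha t ht f
end

section
/- Let p₁, …, p_r be prime numbers and b = (b₁, …, b_r) with each b_i a nonzero element of ℤ/p_iℤ. Let t be an integer with t > 2^r · ∏_{i : p_i > 2} p_i/(p_i − 1), and let a₁, …, a_t be a sequence of t elements of ℤ/p₁ℤ × ⋯ × ℤ/p_rℤ. Then there exist indices i < j such that for every coordinate k, the k-th coordinate of a_j − a_i is not equal to b_k. -/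
/-!
If every difference `a j - a i` (`i < j`) hit `b` in some coordinate `k`, consider in `ℤ/pₖ` the
set `Eₖ = {2m·bₖ : 0 ≤ m < ⌊pₖ/2⌋}`. Then `bₖ ∉ Eₖ - Eₖ`, since `2m` and `2m' + 1` are distinct
integers below `pₖ`. So no `a j - a i` lies in `A - A` for the box `A = ∏ₖ Eₖ`, the translates
`a i + A` are pairwise disjoint, and `t · ∏ ⌊pₖ/2⌋ ≤ ∏ pₖ`. Since
`pₖ = 2 · ⌊pₖ/2⌋ · (pₖ/(pₖ-1) if pₖ is odd, 1 if pₖ = 2)`, this contradicts the bound on `t`.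
-/
open Finset Pointwise

theorem Finset.card_mul_card_le_of_sub_notMem_sub {G ι : Type*} [AddCommGroup G] [Fintype G]
    [DecidableEq G] [LinearOrder ι] [Fintype ι] (A : Finset G) (a : ι → G)
    (h : ∀ i j, i < j → a j - a i ∉ A - A) :
    Fintype.card ι * #A ≤ Fintype.card G := by
  have hne : ∀ i j c c', i < j → c ∈ A → c' ∈ A → a i + c ≠ a j + c' :=
    fun i j c c' hij hc hc' heq => h i j hij <| by
      rw [show a j - a i = c - c' by rw [sub_eq_sub_iff_add_eq_add, ← heq, add_comm]]
      exact sub_mem_sub hc hc'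
  have hinj : Set.InjOn (fun x : ι × G => a x.1 + x.2) (univ ×ˢ A : Finset (ι × G)) := by
    rintro ⟨i, c⟩ hc ⟨j, c'⟩ hc' heq
    simp only [coe_product, coe_univ, Set.mem_prod, Set.mem_univ, mem_coe, true_and] at hc hc' heq
    rcases lt_trichotomy i j with hij | rfl | hji
    · exact absurd heq (hne i j c c' hij hc hc')
    · rw [add_left_cancel heq]
    · exact absurd heq.symm (hne j i c' c hji hc' hc)
  calc Fintype.card ι * #A = #((univ ×ˢ A).image fun x : ι × G => a x.1 + x.2) := by
        rw [card_image_of_injOn hinj, card_product, card_univ]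
    _ ≤ Fintype.card G := card_le_univ _

theorem ZMod.natCast_two_mul_add_inj {n j j' e e' : ℕ} (hj : j < n / 2) (hj' : j' < n / 2)
    (he : e < 2) (he' : e' < 2)
    (h : ((2 * j + e : ℕ) : ZMod n) = ((2 * j' + e' : ℕ) : ZMod n)) :
    j = j' ∧ e = e' := by
  rw [ZMod.natCast_eq_natCast_iff', Nat.mod_eq_of_lt (by omega), Nat.mod_eq_of_lt (by omega)] at h
  omega

namespace ZMod

def evenMultiples {n : ℕ} (b : ZMod n) : Finset (ZMod n) :=
  (range (n / 2)).image fun j => ((2 * j : ℕ) : ZMod n) * b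

variable {n : ℕ} {b : ZMod n}

theorem card_evenMultiples (hb : IsUnit b) : #(evenMultiples b) = n / 2 := by
  rw [evenMultiples, card_image_of_injOn, card_range]
  intro j hj j' hj' heq
  simp only [coe_range, Set.mem_Iio] at hj hj'
  exact (natCast_two_mul_add_inj (e := 0) (e' := 0) hj hj' two_pos two_pos
    (hb.mul_left_inj.mp heq)).1

theorem notMem_evenMultiples_sub (hb : IsUnit b) : b ∉ evenMultiples b - evenMultiples b := by
  simp only [evenMultiples, mem_sub, mem_image, mem_range]
  rintro ⟨_, ⟨j, hj, rfl⟩, _, ⟨j', hj', rfl⟩, heq⟩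
  have hcast : ((2 * j + 0 : ℕ) : ZMod n) = ((2 * j' + 1 : ℕ) : ZMod n) := by
    refine hb.mul_left_inj.mp ?_
    push_cast at heq ⊢
    linear_combination heq
  have := natCast_two_mul_add_inj hj hj' two_pos one_lt_two hcast
  omega

end ZMod

theorem Nat.Prime.cast_eq_two_mul_mul_div_two {p : ℕ} (hp : p.Prime) :
    (p : ℝ) = 2 * (if 2 < p then (p : ℝ) / (p - 1) else 1) * ((p / 2 : ℕ) : ℝ) := by
  rcases hp.eq_two_or_odd' with rfl | hodd
  · norm_num
  · obtain ⟨m, rfl⟩ := hodd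
    have hm : 0 < m := by have := hp.two_le; omega
    rw [if_pos (by omega), show (2 * m + 1) / 2 = m by omega]
    have : (0 : ℝ) < m := by exact_mod_cast hm
    push_cast
    field_simp
    ring

theorem prod_cast_primes_eq {ι : Type*} [Fintype ι] (p : ι → ℕ) (hp : ∀ i, (p i).Prime) :
    ∏ i, (p i : ℝ) = 2 ^ Fintype.card ι *
      (∏ i ∈ univ.filter (fun i => 2 < p i), (p i : ℝ) / ((p i : ℝ) - 1)) *
      ∏ i, ((p i / 2 : ℕ) : ℝ) := by
  rw [prod_filter, ← card_univ, ← prod_const, ← prod_mul_distrib, ← prod_mul_distrib]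
  exact prod_congr rfl fun i _ => (hp i).cast_eq_two_mul_mul_div_two

theorem smallest_nonresidue_stmt4 (r : ℕ) (p : Fin r → ℕ) (hp : ∀ i, (p i).Prime)
    (b : ∀ i, ZMod (p i)) (hb : ∀ i, b i ≠ 0) (t : ℕ)
    (ht : (t : ℝ) > 2 ^ r *
      ∏ i ∈ Finset.univ.filter (fun i => 2 < p i), (p i : ℝ) / ((p i : ℝ) - 1))
    (a : Fin t → ∀ i, ZMod (p i)) :
    ∃ i j : Fin t, i < j ∧ ∀ k, (a j - a i) k ≠ b k := by
  have hfact := fun i => Fact.mk (hp i)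
  have hunit : ∀ k, IsUnit (b k) := fun k => (hb k).isUnit
  by_contra! hhit
  set A := Fintype.piFinset fun k => ZMod.evenMultiples (b k)
  have hsep : ∀ i j, i < j → a j - a i ∉ A - A := by
    intro i j hij hmem
    obtain ⟨k, hk⟩ := hhit i j hij
    obtain ⟨c, hc, c', hc', hcc'⟩ := mem_sub.mp hmem
    exact ZMod.notMem_evenMultiples_sub (hunit k) <| mem_sub.mpr
      ⟨c k, Fintype.mem_piFinset.mp hc k, c' k, Fintype.mem_piFinset.mp hc' k,
        by rw [← hk, ← hcc', Pi.sub_apply]⟩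
  have hpack := card_mul_card_le_of_sub_notMem_sub A a hsep
  simp only [A, Fintype.card_fin, Fintype.card_piFinset, ZMod.card_evenMultiples (hunit _),
    Fintype.card_pi, ZMod.card] at hpack
  have hhalf : (0 : ℝ) < ∏ k, ((p k / 2 : ℕ) : ℝ) :=
    prod_pos fun k _ => Nat.cast_pos.mpr (Nat.div_pos (hp k).two_le two_pos)
  have hpackReal : (t : ℝ) * ∏ k, ((p k / 2 : ℕ) : ℝ) ≤ ∏ k, (p k : ℝ) := by
    exact_mod_cast hpack
  have hprod := prod_cast_primes_eq p hp
  rw [Fintype.card_fin] at hprod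
  linarith [mul_lt_mul_of_pos_right ht hhalf]
end

section
/- Let p be a prime and p₁, …, p_r distinct prime divisors of p − 1. Let n be an integer coprime to p that is simultaneously a p_i-th power nonresidue modulo p for each i = 1, …, r. Let d₁ < d₂ < ⋯ < d_t be divisors of n with t > 2^r · ∏_{i : p_i > 2} p_i/(p_i − 1). Then there exist indices i < j such that n·d_i/d_j is also simultaneously a p₁, …, p_r-th power nonresidue modulo p. -/
/-!
Fix a generator `g` of `(ZMod p)ˣ` and write `n = g ^ a`, `d i = g ^ L i`. Then `n * d i / d j`
is a `q`-th power iff `a + L i - L j ≡ 0 [ZMOD q]`, and `a` is nonzero modulo every `q k`. With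
`w i k = L i / a` in `ZMod (q k)` we need `i < j` such that `w j k - w i k ≠ 1` for all `k`.
Put around each `w i` the box `∏ k, (w i k - {0, 2, …, 2 (q k / 2 - 1)})`. Since
`t * ∏ k, q k / 2 > ∏ k, q k`, two boxes meet, and two points of one box differ in each
coordinate by an even number of absolute value less than `q k - 1`, hence not by `±1` modulo `q k`.
The constant `2 ^ r * ∏ q / (q - 1)` over the odd `q` is exactly `∏ k, q k / (q k / 2)`.
-/

open Finset Subgroup

theorem ZMod.natCast_two_mul_inj {q a b : ℕ} (ha : a < q / 2) (hb : b < q / 2)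
    (h : ((2 * a : ℕ) : ZMod q) = (2 * b : ℕ)) : a = b := by
  rw [ZMod.natCast_eq_natCast_iff', Nat.mod_eq_of_lt (by omega),
    Nat.mod_eq_of_lt (by omega)] at h
  omega

theorem ZMod.natCast_two_mul_ne_add_one {q a b : ℕ} (ha : a < q / 2) (hb : b < q / 2) :
    ((2 * a : ℕ) : ZMod q) ≠ (2 * b : ℕ) + 1 := by
  rw [← Nat.cast_succ, Ne, ZMod.natCast_eq_natCast_iff', Nat.mod_eq_of_lt (by omega),
    Nat.mod_eq_of_lt (by omega)]
  omega

theorem exists_lt_forall_ne_add_one {ι α : Type*} [Fintype ι] [DecidableEq ι] [LinearOrder α]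
    [Fintype α] {q : ι → ℕ} (w : α → (k : ι) → ZMod (q k))
    (hcard : ∏ k, q k < Fintype.card α * ∏ k, q k / 2) :
    ∃ i j, i < j ∧ ∀ k, w j k ≠ w i k + 1 := by
  have hq0 : ∀ k, NeZero (q k) := fun k =>
    ⟨fun h => by simp [prod_eq_zero (mem_univ k) h] at hcard; have := hcard.2 k; omega⟩
  let f : α × ((k : ι) → Fin (q k / 2)) → (k : ι) → ZMod (q k) :=
    fun x k => w x.1 k - (2 * x.2 k : ℕ)
  obtain ⟨⟨i, m⟩, ⟨j, m'⟩, hne, hf⟩ := Fintype.exists_ne_map_eq_of_card_lt f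
    (by simpa [Fintype.card_pi, ZMod.card] using hcard)
  have hw : ∀ k, w j k = w i k - (2 * m k : ℕ) + (2 * m' k : ℕ) := fun k => by
    linear_combination -congrFun hf k
  have hij : i ≠ j := by
    rintro rfl
    refine hne (Prod.ext rfl (funext fun k => Fin.ext ?_))
    exact ZMod.natCast_two_mul_inj (m k).isLt (m' k).isLt (by linear_combination hw k)
  rcases hij.lt_or_gt with h | h
  · refine ⟨i, j, h, fun k hk => ZMod.natCast_two_mul_ne_add_one (m' k).isLt (m k).isLt ?_⟩
    linear_combination hk - hw k
  · refine ⟨j, i, h, fun k hk => ZMod.natCast_two_mul_ne_add_one (m k).isLt (m' k).isLt ?_⟩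
    linear_combination hk + hw k

theorem Nat.Prime.cast_eq_two_mul_ite_mul_div_two {Q : ℕ} (hQ : Q.Prime) :
    (Q : ℝ) = 2 * (if 2 < Q then (Q : ℝ) / (Q - 1) else 1) * ((Q / 2 : ℕ) : ℝ) := by
  rcases hQ.eq_two_or_odd' with rfl | ⟨m, rfl⟩
  · norm_num
  · have hm : 1 ≤ m := by have := hQ.two_le; omega
    rw [if_pos (by omega), show (2 * m + 1) / 2 = m by omega]
    have hm' : (1 : ℝ) ≤ m := by exact_mod_cast hm
    push_cast
    field_simp
    ring

theorem prod_lt_mul_prod_div_two {ι : Type*} [Fintype ι] {q : ι → ℕ}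
    (hq : ∀ k, (q k).Prime) {t : ℕ} (ht : (t : ℝ) > 2 ^ Fintype.card ι *
      ∏ k ∈ univ.filter (fun k => 2 < q k), (q k : ℝ) / ((q k : ℝ) - 1)) :
    ∏ k, q k < t * ∏ k, q k / 2 := by
  have hfactor : (∏ k, (q k : ℝ)) = (2 ^ Fintype.card ι *
      ∏ k ∈ univ.filter (fun k => 2 < q k), (q k : ℝ) / ((q k : ℝ) - 1)) *
      ∏ k, ((q k / 2 : ℕ) : ℝ) := by
    rw [prod_filter, ← card_univ, ← prod_const, ← prod_mul_distrib, ← prod_mul_distrib]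
    exact prod_congr rfl fun k _ => (hq k).cast_eq_two_mul_ite_mul_div_two
  have hpos : (0 : ℝ) < ∏ k, ((q k / 2 : ℕ) : ℝ) :=
    prod_pos fun k _ => Nat.cast_pos.mpr (by have := (hq k).two_le; omega)
  have hlt : (∏ k, (q k : ℝ)) < t * ∏ k, ((q k / 2 : ℕ) : ℝ) := by
    rw [hfactor]
    exact mul_lt_mul_of_pos_right ht hpos
  exact_mod_cast hlt

theorem exists_pow_eq_zpow_iff_intCast_eq_zero {G : Type*} [Group G] [Finite G] {g : G}
    (hg : ∀ x, x ∈ zpowers g) {Q : ℕ} (hQ : Q ∣ Nat.card G) (m : ℤ) :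
    (∃ x : G, x ^ Q = g ^ m) ↔ (m : ZMod Q) = 0 := by
  rw [ZMod.intCast_zmod_eq_zero_iff_dvd]
  constructor
  · rintro ⟨x, hx⟩
    obtain ⟨s, rfl⟩ := mem_zpowers_iff.mp (hg x)
    rw [← zpow_natCast, ← zpow_mul, zpow_eq_zpow_iff_modEq,
      orderOf_eq_card_of_forall_mem_zpowers hg] at hx
    have hmod : s * Q ≡ m [ZMOD Q] := hx.of_dvd (Int.natCast_dvd_natCast.mpr hQ)
    simpa using hmod.dvd.add (dvd_mul_left (Q : ℤ) s)
  · rintro ⟨s, rfl⟩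
    exact ⟨g ^ s, by rw [← zpow_natCast, ← zpow_mul, mul_comm]⟩

theorem exists_pow_eq_unit_iff {M : Type*} [GroupWithZero M] {Q : ℕ} (hQ : Q ≠ 0) (u : Mˣ) :
    (∃ x : M, x ^ Q = u) ↔ ∃ y : Mˣ, y ^ Q = u := by
  constructor
  · rintro ⟨x, hx⟩
    have hx0 : x ≠ 0 := fun h => u.ne_zero (by rw [← hx, h, zero_pow hQ])
    exact ⟨Units.mk0 x hx0, Units.ext (by simpa using hx)⟩
  · rintro ⟨y, rfl⟩
    exact ⟨y, (Units.val_pow_eq_pow_val y Q).symm⟩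

theorem smallest_nonresidue_stmt6_general (p : ℕ) [Fact p.Prime] (r : ℕ) (q : Fin r → ℕ)
    (hq : ∀ i, (q i).Prime) (hqd : ∀ i, q i ∣ p - 1)
    (n : ℕ) (hcop : ¬ p ∣ n)
    (hnres : ∀ i, ¬ ∃ x : ZMod p, x ^ (q i) = (n : ZMod p))
    (t : ℕ)
    (ht : (t : ℝ) > 2 ^ r *
      ∏ i ∈ Finset.univ.filter (fun i => 2 < q i), (q i : ℝ) / ((q i : ℝ) - 1))
    (d : Fin t → ℕ) (hdvd : ∀ k, d k ∣ n) :
    ∃ i j : Fin t, i < j ∧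
      ∀ k, ¬ ∃ x : ZMod p, x ^ (q k) = (n : ZMod p) * (d i : ZMod p) * ((d j : ZMod p))⁻¹ := by
  have : ∀ k, Fact (q k).Prime := fun k => ⟨hq k⟩
  obtain ⟨g, hg⟩ := IsCyclic.exists_generator (α := (ZMod p)ˣ)
  choose log hlog using fun u => mem_zpowers_iff.mp (hg u)
  have hres (k : Fin r) (m : ℤ) :
      (∃ x : ZMod p, x ^ q k = ((g ^ m : (ZMod p)ˣ) : ZMod p)) ↔ (m : ZMod (q k)) = 0 := by
    rw [exists_pow_eq_unit_iff (hq k).ne_zero, exists_pow_eq_zpow_iff_intCast_eq_zero hg]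
    rw [Nat.card_eq_fintype_card, ZMod.card_units]
    exact hqd k
  have hne_zero {m : ℕ} (hm : m ∣ n) : (m : ZMod p) ≠ 0 := by
    rw [Ne, ZMod.natCast_eq_zero_iff]
    exact fun hpm => hcop (hpm.trans hm)
  set a := log (Units.mk0 _ (hne_zero dvd_rfl))
  set L := fun i => log (Units.mk0 _ (hne_zero (hdvd i)))
  have ha (k : Fin r) : (a : ZMod (q k)) ≠ 0 := fun h =>
    hnres k (by simpa [a, hlog] using (hres k a).mpr h)
  obtain ⟨i, j, hij, hw⟩ :=
    exists_lt_forall_ne_add_one (fun i k => (L i : ZMod (q k)) / (a : ZMod (q k)))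
      (by simpa using prod_lt_mul_prod_div_two hq (by simpa using ht))
  refine ⟨i, j, hij, fun k => ?_⟩
  have hquot :
      (n : ZMod p) * d i * (d j : ZMod p)⁻¹ = ((g ^ (a + L i - L j) : (ZMod p)ˣ) : ZMod p) := by
    simp [zpow_sub, zpow_add, a, L, hlog]
  rw [hquot, hres]
  intro h
  apply hw k
  rw [div_add_one (ha k), div_left_inj' (ha k)]
  push_cast at h
  linear_combination -h

theorem smallest_nonresidue_stmt6 (p : ℕ) [Fact p.Prime] (r : ℕ) (q : Fin r → ℕ)
    (hq : ∀ i, (q i).Prime) (hqd : ∀ i, q i ∣ p - 1) (hinj : Function.Injective q)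
    (n : ℕ) (hn : 0 < n) (hcop : ¬ p ∣ n)
    (hnres : ∀ i, ¬ ∃ x : ZMod p, x ^ (q i) = (n : ZMod p))
    (t : ℕ)
    (ht : (t : ℝ) > 2 ^ r *
      ∏ i ∈ Finset.univ.filter (fun i => 2 < q i), (q i : ℝ) / ((q i : ℝ) - 1))
    (d : Fin t → ℕ) (hmono : StrictMono d) (hdvd : ∀ k, d k ∣ n) :
    ∃ i j : Fin t, i < j ∧
      ∀ k, ¬ ∃ x : ZMod p, x ^ (q k) = (n : ZMod p) * (d i : ZMod p) * ((d j : ZMod p))⁻¹ :=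
  smallest_nonresidue_stmt6_general p r q hq hqd n hcop hnres t ht d hdvd
end

section
/- Let b be a squarefree positive integer with τ(b) ≥ 2t divisors, and let σ > 0. Define W*(b;σ) to be the number of ordered pairs (d′, d″) of distinct divisors of b with |log(d′/d″)| ≤ σ. Suppose the divisors of b cannot be arranged to contain t divisors d₁ < ⋯ < d_t with log(d_{i+1}/d_i) > σ for all i. Then τ(b)² ≤ 2·t·W*(b;σ). -/
/-!
Let `ℓ(d)` be the length of the longest chain of divisors of `b` ending at `d` whose consecutive
ratios exceed `e^σ`. Without `t` well-spaced divisors, `ℓ` takes at most `t - 1` values, and two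
distinct divisors with the same value of `ℓ` are within a factor `e^σ` of each other, since
otherwise the larger one would extend the longest chain of the smaller. Cauchy–Schwarz over the
level sets of `ℓ` gives `τ(b)² ≤ (t - 1) (τ(b) + W*(b;σ))`, and `τ(b) ≥ 2t` absorbs the diagonal
term.
-/

open Finset

theorem card_sq_le_card_mul_card_filter_eq {α β : Type*} [DecidableEq β]
    (s : Finset α) {J : Finset β} {f : α → β} (hf : (s : Set α).MapsTo f J) :
    #s ^ 2 ≤ #J * #{p ∈ s ×ˢ s | f p.1 = f p.2} := by
  have hfst : ((s ×ˢ s : Finset (α × α)) : Set (α × α)).MapsTo (fun p => f p.1) J :=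
    fun p hp => hf (mem_product.1 hp).1
  calc #s ^ 2 = (∑ j ∈ J, #{a ∈ s | f a = j}) ^ 2 := by rw [← card_eq_sum_card_fiberwise hf]
    _ ≤ #J * ∑ j ∈ J, #{a ∈ s | f a = j} ^ 2 := sq_sum_le_card_mul_sum_sq
    _ = #J * #{p ∈ s ×ˢ s | f p.1 = f p.2} := by
      rw [card_eq_sum_card_fiberwise (hfst.mono_left (coe_subset.2 (filter_subset _ _)))]
      refine congrArg _ (sum_congr rfl fun j _ => ?_)
      rw [sq, ← card_product, filter_filter]
      congr 1
      ext p
      simp only [mem_filter, mem_product]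
      grind

theorem sq_le_two_mul_mul_of_sq_le_mul_add {n k w : ℕ} (hk : 2 * k ≤ n)
    (h : n ^ 2 ≤ k * (n + w)) : n ^ 2 ≤ 2 * k * w := by
  nlinarith

def WellSpaced (σ : ℝ) (e d : ℕ) : Prop := e < d ∧ σ < Real.log ((d : ℝ) / e)

def HasWellSpacedDivisors (b : ℕ) (σ : ℝ) (t : ℕ) : Prop :=
  ∃ d : Fin t → ℕ, StrictMono d ∧ (∀ i, d i ∣ b) ∧
    ∀ (i : ℕ) (h : i + 1 < t),
      σ < Real.log ((d ⟨i + 1, h⟩ : ℝ) / (d ⟨i, Nat.lt_of_succ_lt h⟩ : ℝ))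

theorem hasWellSpacedDivisors_of_isChain {b : ℕ} {σ : ℝ} {t : ℕ} {l : List ℕ}
    (hl : l.IsChain (WellSpaced σ)) (hdvd : ∀ x ∈ l, x ∣ b) (ht : t ≤ l.length) :
    HasWellSpacedDivisors b σ t := by
  have hlt : l.Pairwise (· < ·) := (hl.imp fun _ _ h => h.1).pairwise
  refine ⟨fun i => l[i.1], fun i j hij => List.pairwise_iff_getElem.1 hlt _ _ _ _ hij,
    fun i => hdvd _ (List.getElem_mem _), fun i h => (hl.getElem i (by omega)).2⟩

open Classical in
/-- The length of the longest `WellSpaced σ`-chain of divisors of `b` ending at `d`. -/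
noncomputable def chainLen (b : ℕ) (σ : ℝ) (d : ℕ) : ℕ :=
  1 + (b.divisors.filter (WellSpaced σ · d)).attach.sup fun e => chainLen b σ e.1
termination_by d
decreasing_by exact (mem_filter.1 e.2).2.1

section chainLen

variable {b : ℕ} {σ : ℝ}

theorem one_le_chainLen (d : ℕ) : 1 ≤ chainLen b σ d := by
  rw [chainLen]; omega

theorem chainLen_lt_chainLen {e d : ℕ} (he : e ∈ b.divisors) (hed : WellSpaced σ e d) :
    chainLen b σ e < chainLen b σ d := by
  classical
  conv_rhs => rw [chainLen]
  have := le_sup (f := fun e : {x // x ∈ b.divisors.filter (WellSpaced σ · d)} => chainLen b σ e.1)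
    (mem_attach _ ⟨e, mem_filter.2 ⟨he, hed⟩⟩)
  convert Nat.lt_one_add_iff.2 this

theorem exists_isChain_length_eq_chainLen {d : ℕ} (hd : d ∈ b.divisors) :
    ∃ l : List ℕ, l.length = chainLen b σ d ∧ l.head? = some d ∧
      l.IsChain (flip (WellSpaced σ)) ∧ ∀ x ∈ l, x ∣ b := by
  classical
  induction d using Nat.strong_induction_on with
  | _ d ih =>
  by_cases hF : (b.divisors.filter (WellSpaced σ · d)).Nonempty
  · obtain ⟨⟨e, he⟩, -, hsup⟩ := exists_mem_eq_sup _ hF.attach fun e => chainLen b σ e.1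
    obtain ⟨heb, hed⟩ := mem_filter.1 he
    obtain ⟨l, hlen, hhead, hchain, hdvd⟩ := ih e hed.1 heb
    refine ⟨d :: l, ?_, rfl, List.isChain_cons.2 ⟨?_, hchain⟩, ?_⟩
    · rw [chainLen, hsup, List.length_cons, hlen, add_comm]
    · simpa [hhead, flip] using hed
    · simpa using ⟨Nat.dvd_of_mem_divisors hd, hdvd⟩
  · refine ⟨[d], ?_, rfl, List.isChain_singleton _, by simpa using Nat.dvd_of_mem_divisors hd⟩
    rw [chainLen, not_nonempty_iff_eq_empty.1 hF]
    simp

theorem chainLen_lt_of_not_hasWellSpacedDivisors {t d : ℕ} (hno : ¬ HasWellSpacedDivisors b σ t)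
    (hd : d ∈ b.divisors) : chainLen b σ d < t := by
  obtain ⟨l, hlen, -, hchain, hdvd⟩ := exists_isChain_length_eq_chainLen (σ := σ) hd
  by_contra! ht
  exact hno (hasWellSpacedDivisors_of_isChain (List.isChain_reverse.2 hchain)
    (by simpa using hdvd) (by simpa [hlen] using ht))

theorem abs_log_div_le_of_chainLen_eq {d e : ℕ} (hd : d ∈ b.divisors) (he : e ∈ b.divisors)
    (hne : d ≠ e) (h : chainLen b σ d = chainLen b σ e) : |Real.log ((d : ℝ) / e)| ≤ σ := by
  wlog hde : d < e generalizing d e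
  · rw [← abs_neg, ← Real.log_inv, inv_div]
    exact this he hd hne.symm h.symm (hne.lt_or_gt.resolve_left hde)
  have hd0 : (0 : ℝ) < d := by exact_mod_cast Nat.pos_of_mem_divisors hd
  have hpos : 0 ≤ Real.log ((e : ℝ) / d) :=
    Real.log_nonneg ((one_le_div hd0).2 (by exact_mod_cast hde.le))
  rw [← abs_neg, ← Real.log_inv, inv_div, abs_of_nonneg hpos]
  exact not_lt.1 fun hσ => (chainLen_lt_chainLen hd ⟨hde, hσ⟩).ne h

theorem card_filter_chainLen_eq_le :
    #{p ∈ b.divisors ×ˢ b.divisors | chainLen b σ p.1 = chainLen b σ p.2} ≤ #b.divisors +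
      {q : ℕ × ℕ | q.1 ∣ b ∧ q.2 ∣ b ∧ q.1 ≠ q.2 ∧ |Real.log ((q.1 : ℝ) / (q.2 : ℝ))| ≤ σ}.ncard := by
  rcases eq_or_ne b 0 with rfl | hb
  · simp
  rw [← card_filter_add_card_filter_not (fun p : ℕ × ℕ => p.1 = p.2)]
  gcongr ?_ + ?_
  · refine (card_le_card fun p hp => ?_).trans_eq (diag_card b.divisors)
    simp only [mem_filter, mem_product, mem_diag] at hp ⊢
    exact ⟨hp.1.1.1, hp.2⟩
  · rw [← Set.ncard_coe_finset]
    refine Set.ncard_le_ncard (fun p hp => ?_) ((b.divisors ×ˢ b.divisors).finite_toSet.subset ?_)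
    · simp only [coe_filter, mem_filter, mem_product, Set.mem_ofPred_eq] at hp ⊢
      obtain ⟨⟨⟨h1, h2⟩, hlen⟩, hne⟩ := hp
      exact ⟨Nat.dvd_of_mem_divisors h1, Nat.dvd_of_mem_divisors h2, hne,
        abs_log_div_le_of_chainLen_eq h1 h2 hne hlen⟩
    · intro q hq
      simp only [coe_product, Set.mem_prod, mem_coe, Nat.mem_divisors]
      exact ⟨⟨hq.1, hb⟩, hq.2.1, hb⟩

end chainLen

theorem smallest_nonresidue_stmt9_general (b : ℕ) (σ : ℝ)
    (t : ℕ) (hτ : 2 * t ≤ b.divisors.card)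
    (hno : ¬ ∃ d : Fin t → ℕ, StrictMono d ∧ (∀ i, d i ∣ b) ∧
      ∀ (i : ℕ) (h : i + 1 < t),
        σ < Real.log ((d ⟨i + 1, h⟩ : ℝ) / (d ⟨i, Nat.lt_of_succ_lt h⟩ : ℝ))) :
    b.divisors.card ^ 2 ≤ 2 * t *
      {q : ℕ × ℕ | q.1 ∣ b ∧ q.2 ∣ b ∧ q.1 ≠ q.2 ∧
        |Real.log ((q.1 : ℝ) / (q.2 : ℝ))| ≤ σ}.ncard := by
  have hlevels : (b.divisors : Set ℕ).MapsTo (chainLen b σ) (Ico 1 t) := fun d hd =>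
    mem_Ico.2 ⟨one_le_chainLen d, chainLen_lt_of_not_hasWellSpacedDivisors hno hd⟩
  have hsq := (card_sq_le_card_mul_card_filter_eq b.divisors hlevels).trans
    (Nat.mul_le_mul_left _ card_filter_chainLen_eq_le)
  rw [Nat.card_Ico] at hsq
  calc b.divisors.card ^ 2 ≤ 2 * (t - 1) * _ := sq_le_two_mul_mul_of_sq_le_mul_add (by omega) hsq
    _ ≤ 2 * t * _ := by gcongr; omega

theorem smallest_nonresidue_stmt9 (b : ℕ) (hb : Squarefree b) (σ : ℝ) (hσ : 0 < σ)
    (t : ℕ) (hτ : 2 * t ≤ b.divisors.card)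
    (hno : ¬ ∃ d : Fin t → ℕ, StrictMono d ∧ (∀ i, d i ∣ b) ∧
      ∀ (i : ℕ) (h : i + 1 < t),
        σ < Real.log ((d ⟨i + 1, h⟩ : ℝ) / (d ⟨i, Nat.lt_of_succ_lt h⟩ : ℝ))) :
    b.divisors.card ^ 2 ≤ 2 * t *
      {q : ℕ × ℕ | q.1 ∣ b ∧ q.2 ∣ b ∧ q.1 ≠ q.2 ∧
        |Real.log ((q.1 : ℝ) / (q.2 : ℝ))| ≤ σ}.ncard :=
  smallest_nonresidue_stmt9_general b σ t hτ hno
end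

section
/- Suppose a positive integer n has a divisor b = p₁⋯p_r (product of distinct primes) such that n/b < n^{1/(2t^c)}, and suppose n has t divisors d₁ < ⋯ < d_t with d_{j+1}/d_j ≥ n^{1/t^c} for all j, where t > 2^r. Then we reach a contradiction; i.e., no such configuration exists. -/
/-! The gcd with the squarefree `b` takes only `2 ^ r` values, so two of the `t > 2 ^ r` divisors,
`d i < d j`, share it. As `d j / gcd (d j) b` divides `n / b`, this gives
`d j / d i ≤ n / b < n ^ (1 / (2 t ^ c)) ≤ n ^ (1 / t ^ c)`, against the spacing. -/

theorem Nat.card_divisors_of_squarefree {b : ℕ} (hb : Squarefree b) :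
    b.divisors.card = 2 ^ b.primeFactors.card := by
  rw [Nat.card_divisors hb.ne_zero, ← Finset.prod_const]
  refine Finset.prod_congr rfl fun p hp => ?_
  rw [Nat.factorization_eq_one_of_squarefree hb (Nat.prime_of_mem_primeFactors hp)
    (Nat.dvd_of_mem_primeFactors hp)]

theorem Nat.exists_lt_gcd_eq_of_card_divisors_lt {t b : ℕ} (hb : b ≠ 0) (d : Fin t → ℕ)
    (ht : b.divisors.card < t) : ∃ i j, i < j ∧ (d i).gcd b = (d j).gcd b := by
  have hmaps : ∀ i ∈ (Finset.univ : Finset (Fin t)), (d i).gcd b ∈ b.divisors :=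
    fun i _ => Nat.mem_divisors.mpr ⟨Nat.gcd_dvd_right _ _, hb⟩
  obtain ⟨i, -, j, -, hij, hg⟩ := Finset.exists_ne_map_eq_of_card_lt_of_maps_to
    (by simpa using ht) hmaps
  rcases hij.lt_or_gt with h | h
  · exact ⟨i, j, h, hg⟩
  · exact ⟨j, i, h, hg.symm⟩

theorem Nat.div_gcd_dvd_of_dvd_mul {d b m : ℕ} (hd : d ≠ 0) (h : d ∣ b * m) :
    d / d.gcd b ∣ m := by
  have hg : 0 < d.gcd b := Nat.gcd_pos_of_pos_left b (Nat.pos_of_ne_zero hd)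
  refine (Nat.coprime_div_gcd_div_gcd hg).dvd_of_dvd_mul_left ?_
  rw [← Nat.mul_dvd_mul_iff_left hg, Nat.mul_div_cancel' (Nat.gcd_dvd_left d b), ← mul_assoc,
    Nat.mul_div_cancel' (Nat.gcd_dvd_right d b)]
  exact h

theorem Nat.div_le_div_of_gcd_eq {n b d₁ d₂ : ℕ} (hn : n ≠ 0) (hbn : b ∣ n) (h₁ : d₁ ∣ n)
    (h₂ : d₂ ∣ n) (hg : d₁.gcd b = d₂.gcd b) : (d₂ : ℝ) / d₁ ≤ (n / b : ℕ) := by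
  have hd₂ : d₂ ≠ 0 := ne_zero_of_dvd_ne_zero hn h₂
  set g := d₂.gcd b
  have hg0 : 0 < g := Nat.gcd_pos_of_pos_left b (Nat.pos_of_ne_zero hd₂)
  have hgd₁ : g ≤ d₁ := Nat.le_of_dvd (Nat.pos_of_ne_zero (ne_zero_of_dvd_ne_zero hn h₁))
    (hg ▸ Nat.gcd_dvd_left d₁ b)
  have hquot : d₂ / g ∣ n / b :=
    Nat.div_gcd_dvd_of_dvd_mul hd₂ (by rwa [Nat.mul_div_cancel' hbn])
  have hnb : 0 < n / b := Nat.div_pos (Nat.le_of_dvd (Nat.pos_of_ne_zero hn) hbn)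
    (Nat.pos_of_dvd_of_pos hbn (Nat.pos_of_ne_zero hn))
  calc (d₂ : ℝ) / d₁ ≤ d₂ / g := by gcongr
    _ = (d₂ / g : ℕ) := (Nat.cast_div (Nat.gcd_dvd_left d₂ b) (by positivity)).symm
    _ ≤ (n / b : ℕ) := by exact_mod_cast Nat.le_of_dvd hnb hquot

theorem le_div_of_forall_le_div_succ {t : ℕ} {d : Fin t → ℕ} (hmono : StrictMono d) {x : ℝ}
    (hspace : ∀ (i : ℕ) (h : i + 1 < t), x ≤ (d ⟨i + 1, h⟩ : ℝ) / d ⟨i, Nat.lt_of_succ_lt h⟩)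
    {i j : Fin t} (hij : i < j) : x ≤ (d j : ℝ) / d i := by
  have hsucc : (i : ℕ) + 1 < t := lt_of_le_of_lt hij j.isLt
  refine (hspace i hsucc).trans ?_
  gcongr
  exact hmono.monotone (Fin.mk_le_of_le_val hij)

theorem smallest_nonresidue_stmt18 (n b : ℕ) (hn : 0 < n) (hbn : b ∣ n)
    (hbsf : Squarefree b) (r : ℕ) (hr : r = b.primeFactors.card) (t : ℕ) (c : ℝ)
    (hsmall : ((n / b : ℕ) : ℝ) < (n : ℝ) ^ (1 / (2 * (t : ℝ) ^ c)))
    (d : Fin t → ℕ) (hmono : StrictMono d) (hdvd : ∀ i, d i ∣ n)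
    (hspace : ∀ (i : ℕ) (h : i + 1 < t),
      ((d ⟨i + 1, h⟩ : ℝ) / (d ⟨i, Nat.lt_of_succ_lt h⟩ : ℝ)) ≥ (n : ℝ) ^ (1 / (t : ℝ) ^ c))
    (ht : t > 2 ^ r) :
    False := by
  obtain ⟨i, j, hij, hg⟩ := Nat.exists_lt_gcd_eq_of_card_divisors_lt hbsf.ne_zero d
    (by rwa [Nat.card_divisors_of_squarefree hbsf, ← hr])
  have htc : 0 < (t : ℝ) ^ c := Real.rpow_pos_of_pos (by exact_mod_cast j.pos) c
  have hexp : (n : ℝ) ^ (1 / (2 * (t : ℝ) ^ c)) ≤ (n : ℝ) ^ (1 / (t : ℝ) ^ c) :=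
    Real.rpow_le_rpow_of_exponent_le (by exact_mod_cast hn)
      (one_div_le_one_div_of_le htc (by linarith))
  have hlow := le_div_of_forall_le_div_succ hmono hspace hij
  have hhigh := Nat.div_le_div_of_gcd_eq hn.ne' hbn (hdvd i) (hdvd j) hg
  linarith
end
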